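/- arXiv:0704.1865 — 3 statements merged into one kernel-verified Lean document; each statement's English description precedes it below -/
import Mathlib

section
/- For every positive integer n and every real x, the partial sum of the sine series satisfies |∑_{k=1}^{n} (sin kx)/k| ≤ 3√π. -/
open scoped Real
open MeasureTheory Finset Filter

/-- Complex Fourier coefficient of a `2π`-periodic function. -/
noncomputable def fCoef (f : ℝ → ℂ) (k : ℤ) : ℂ :=
  (1 / (2 * π)) * ∫ x in (-π)..π, f x * Complex.exp (-Complex.I * (k : ℂ) * (x : ℂ))

/-- `n`-th symmetric partial sum of the Fourier series. -/
noncomputable def pSum (f : ℝ → ℂ) (n : ℕ) (x : ℝ) : ℂ :=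
  ∑ k ∈ Finset.Icc (-(n : ℤ)) (n : ℤ), fCoef f k * Complex.exp (Complex.I * (k : ℂ) * (x : ℂ))

/-- `L¹` norm over one period. -/
noncomputable def L1 (g : ℝ → ℂ) : ℝ := ∫ x in (-π)..π, ‖g x‖

/-- Mean Value Bounded Variation Sequence (complex sense). -/
def MVBVS (c : ℕ → ℂ) : Prop :=
  (∃ θ : ℝ, 0 ≤ θ ∧ θ < π / 2 ∧ ∀ n, |(c n).arg| ≤ θ) ∧
  ∃ lam : ℝ, 2 ≤ lam ∧ ∃ C : ℝ, 0 < C ∧ ∀ m : ℕ, 1 ≤ m →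
    ∑ k ∈ Finset.Icc m (2 * m), ‖c (k + 1) - c k‖ ≤
      C / m * ∑ k ∈ Finset.Icc ⌊(m : ℝ) / lam⌋₊ ⌊lam * m⌋₊, ‖c k‖

/-!
For `0 < x ≤ π` split the sum at `m = ⌊π / x⌋`. Since `|sin (k x)| ≤ k x`, each of the first `m`
terms is at most `x`, so together they contribute at most `m x ≤ π`. For the tail, the Dirichlet
kernel bounds the partial sums of `sin (k x)` by `1 / sin (x / 2) ≤ π / x`, and Abel summation
against the decreasing weights `1 / k` bounds the tail by `2 π / ((m + 1) x) < 2`. Periodicity and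
oddness reduce every real `x` to `0 ≤ x ≤ π`, and `π + 2 ≤ 3 √π`.
-/

noncomputable def sinSum (n : ℕ) (x : ℝ) : ℝ := ∑ k ∈ Icc 1 n, Real.sin (k * x) / k

lemma sinSum_periodic (n : ℕ) : Function.Periodic (sinSum n) (2 * π) := fun x ↦ by
  refine sum_congr rfl fun k _ ↦ ?_
  rw [mul_add, Real.sin_add_nat_mul_two_pi]

lemma sinSum_neg (n : ℕ) (x : ℝ) : sinSum n (-x) = -sinSum n x := by
  simp only [sinSum, mul_neg, Real.sin_neg, neg_div, sum_neg_distrib]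

lemma two_mul_sin_half_mul_sum_sin (x : ℝ) (N : ℕ) :
    2 * Real.sin (x / 2) * ∑ k ∈ Icc 1 N, Real.sin (k * x)
      = Real.cos (x / 2) - Real.cos ((N + 1 / 2) * x) := by
  induction N with
  | zero => norm_num [div_eq_inv_mul]
  | succ N ih =>
    have h₁ : (N + 1 / 2) * x = (N + 1) * x - x / 2 := by ring
    have h₂ : ((N + 1 : ℕ) + 1 / 2) * x = (N + 1) * x + x / 2 := by push_cast; ring
    rw [sum_Icc_succ_top (by omega), mul_add, ih, h₁, h₂, Real.cos_sub, Real.cos_add]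
    push_cast
    ring

lemma abs_sum_sin_le {x : ℝ} (hx : 0 < Real.sin (x / 2)) (N : ℕ) :
    |∑ k ∈ Icc 1 N, Real.sin (k * x)| ≤ 1 / Real.sin (x / 2) := by
  rw [le_div_iff₀ hx, ← abs_of_pos hx, ← abs_mul, abs_le]
  have h := two_mul_sin_half_mul_sum_sin x N
  constructor <;> nlinarith [Real.neg_one_le_cos (x / 2), Real.cos_le_one (x / 2),
    Real.neg_one_le_cos ((N + 1 / 2) * x), Real.cos_le_one ((N + 1 / 2) * x)]

section Abel

variable {a : ℕ → ℝ} {B : ℝ}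

/- The invariant of the induction is Abel summation with `A N = ∑_{k=1}^N a k`:
`∑_{k=m+1}^n a k / k = A n / (n+1) - A m / (m+1) + ∑_{k=m+1}^n A k (1/k - 1/(k+1))`. -/
lemma abs_sum_Icc_div_sub_le (hA : ∀ N, |∑ k ∈ Icc 1 N, a k| ≤ B) {m n : ℕ} (hmn : m ≤ n) :
    |∑ k ∈ Icc (m + 1) n, a k / k - (∑ k ∈ Icc 1 n, a k) / (n + 1)|
      ≤ B / (m + 1) + B * (1 / (m + 1) - 1 / (n + 1)) := by
  induction n, hmn using Nat.le_induction with
  | base =>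
    rw [Icc_eq_empty (by omega), sum_empty, zero_sub, abs_neg, abs_div,
      abs_of_pos (by positivity : (0 : ℝ) < m + 1), sub_self, mul_zero, add_zero]
    gcongr
    exact hA m
  | succ n hmn ih =>
    set A := ∑ k ∈ Icc 1 n, a k
    have hw : 0 ≤ 1 / ((n : ℝ) + 1) - 1 / (n + 1 + 1) := by
      rw [sub_nonneg]
      gcongr
      linarith
    have hstep : ∑ k ∈ Icc (m + 1) (n + 1), a k / k - (∑ k ∈ Icc 1 (n + 1), a k) / (n + 1 + 1)
        = (∑ k ∈ Icc (m + 1) n, a k / k - A / (n + 1))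
          + (∑ k ∈ Icc 1 (n + 1), a k) * (1 / (n + 1) - 1 / (n + 1 + 1)) := by
      rw [sum_Icc_succ_top (by omega), sum_Icc_succ_top (by omega)]
      push_cast
      ring
    push_cast
    rw [hstep]
    calc |(∑ k ∈ Icc (m + 1) n, a k / k - A / (n + 1))
          + (∑ k ∈ Icc 1 (n + 1), a k) * (1 / (n + 1) - 1 / (n + 1 + 1))|
        ≤ |∑ k ∈ Icc (m + 1) n, a k / k - A / (n + 1)|
          + |∑ k ∈ Icc 1 (n + 1), a k| * (1 / (n + 1) - 1 / (n + 1 + 1)) :=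
          (abs_add_le _ _).trans_eq (by rw [abs_mul, abs_of_nonneg hw])
      _ ≤ B / (m + 1) + B * (1 / (m + 1) - 1 / (n + 1))
          + B * (1 / (n + 1) - 1 / (n + 1 + 1)) :=
          add_le_add ih (mul_le_mul_of_nonneg_right (hA _) hw)
      _ = _ := by ring

lemma abs_sum_Icc_div_le (hA : ∀ N, |∑ k ∈ Icc 1 N, a k| ≤ B) (m n : ℕ) :
    |∑ k ∈ Icc (m + 1) n, a k / k| ≤ 2 * B / (m + 1) := by
  rcases lt_or_ge n m with hnm | hmn
  · rw [Icc_eq_empty (by omega), sum_empty, abs_zero]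
    have := (abs_nonneg _).trans (hA 0)
    positivity
  have hn : |(∑ k ∈ Icc 1 n, a k) / (n + 1)| ≤ B / (n + 1) := by
    rw [abs_div, abs_of_pos (by positivity : (0 : ℝ) < n + 1)]
    gcongr
    exact hA n
  set S := ∑ k ∈ Icc (m + 1) n, a k / k
  set T := (∑ k ∈ Icc 1 n, a k) / (n + 1)
  calc |S| = |(S - T) + T| := by rw [sub_add_cancel]
    _ ≤ |S - T| + |T| := abs_add_le _ _
    _ ≤ B / (m + 1) + B * (1 / (m + 1) - 1 / (n + 1)) + B / (n + 1) :=
      add_le_add (abs_sum_Icc_div_sub_le hA hmn) hn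
    _ = 2 * B / (m + 1) := by ring

end Abel

lemma abs_sinSum_le (n : ℕ) (x : ℝ) : |sinSum n x| ≤ n * |x| := by
  calc |sinSum n x| ≤ ∑ k ∈ Icc 1 n, |Real.sin (k * x) / k| := abs_sum_le_sum_abs _ _
    _ ≤ ∑ _k ∈ Icc 1 n, |x| := sum_le_sum fun k hk ↦ by
        have hk : (0 : ℝ) < k := by
          have := (mem_Icc.mp hk).1
          positivity
        rw [abs_div, abs_of_pos hk, div_le_iff₀ hk]
        calc |Real.sin (k * x)| ≤ |k * x| := Real.abs_sin_le_abs
          _ = |x| * k := by rw [abs_mul, abs_of_pos hk, mul_comm]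
    _ = n * |x| := by simp

lemma abs_sum_sin_le_pi_div {x : ℝ} (hx : x ∈ Set.Ioc 0 π) (N : ℕ) :
    |∑ k ∈ Icc 1 N, Real.sin (k * x)| ≤ π / x := by
  have hjordan : x / π ≤ Real.sin (x / 2) :=
    calc x / π = 2 / π * (x / 2) := by ring
      _ ≤ Real.sin (x / 2) := Real.mul_le_sin (by linarith [hx.1]) (by linarith [hx.2])
  have hpos : 0 < x / π := div_pos hx.1 Real.pi_pos
  calc _ ≤ 1 / Real.sin (x / 2) := abs_sum_sin_le (hpos.trans_le hjordan) N
    _ ≤ 1 / (x / π) := one_div_le_one_div_of_le hpos hjordan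
    _ = π / x := one_div_div x π

lemma abs_sinSum_le_of_mem_Ioc {x : ℝ} (hx : x ∈ Set.Ioc 0 π) (n : ℕ) :
    |sinSum n x| ≤ π + 2 := by
  obtain ⟨hx₀, hxπ⟩ := hx
  set m := ⌊π / x⌋₊
  have hmx : m * x ≤ π := (le_div_iff₀ hx₀).mp (Nat.floor_le (by positivity))
  have hm1x : π < (m + 1) * x := (div_lt_iff₀ hx₀).mp (Nat.lt_floor_add_one _)
  have hhead : |sinSum m x| ≤ π := (abs_sinSum_le m x).trans (by rwa [abs_of_pos hx₀])
  rcases le_or_gt n m with hnm | hmn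
  · calc |sinSum n x| ≤ n * |x| := abs_sinSum_le n x
      _ ≤ m * x := by rw [abs_of_pos hx₀]; gcongr
      _ ≤ π + 2 := by linarith [Real.pi_pos]
  have hsplit : sinSum n x = sinSum m x + ∑ k ∈ Icc (m + 1) n, Real.sin (k * x) / k := by
    simp only [sinSum, Icc_add_one_left_eq_Ioc,
      show Icc 1 n = Ioc 0 n from Icc_add_one_left_eq_Ioc 0 n,
      show Icc 1 m = Ioc 0 m from Icc_add_one_left_eq_Ioc 0 m]
    exact (sum_Ioc_consecutive _ (Nat.zero_le m) hmn.le).symm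
  have htail : |∑ k ∈ Icc (m + 1) n, Real.sin (k * x) / k| ≤ 2 :=
    calc _ ≤ 2 * (π / x) / (m + 1) :=
          abs_sum_Icc_div_le (a := fun k ↦ Real.sin (k * x)) (abs_sum_sin_le_pi_div ⟨hx₀, hxπ⟩) m n
      _ ≤ 2 := by
          have : π / x ≤ m + 1 := (div_le_iff₀ hx₀).mpr hm1x.le
          rw [div_le_iff₀ (by positivity)]
          linarith
  rw [hsplit]
  exact (abs_add_le _ _).trans (add_le_add hhead htail)

lemma abs_sinSum_le_pi_add_two (n : ℕ) (x : ℝ) : |sinSum n x| ≤ π + 2 := by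
  obtain ⟨y, ⟨hy₁, hy₂⟩, hxy⟩ := (sinSum_periodic n).exists_mem_Ico Real.two_pi_pos x (-π)
  rw [hxy]
  rcases lt_trichotomy y 0 with hy | rfl | hy
  · rw [← neg_neg y, sinSum_neg, abs_neg]
    exact abs_sinSum_le_of_mem_Ioc ⟨by linarith, by linarith⟩ n
  · simp only [sinSum, mul_zero, Real.sin_zero, zero_div, sum_const_zero, abs_zero]
    positivity
  · exact abs_sinSum_le_of_mem_Ioc ⟨hy, by linarith⟩ n

lemma pi_add_two_le_three_mul_sqrt_pi : π + 2 ≤ 3 * Real.sqrt π := by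
  have hsqrt : (1.77 : ℝ) ≤ Real.sqrt π :=
    Real.le_sqrt_of_sq_le (by nlinarith [Real.pi_gt_d2])
  linarith [Real.pi_lt_d2]

theorem stmt0_general (n : ℕ) (x : ℝ) :
    |∑ k ∈ Finset.Icc 1 n, Real.sin (k * x) / k| ≤ 3 * Real.sqrt π :=
  (abs_sinSum_le_pi_add_two n x).trans pi_add_two_le_three_mul_sqrt_pi

theorem stmt0 (n : ℕ) (hn : 1 ≤ n) (x : ℝ) :
    |∑ k ∈ Finset.Icc 1 n, Real.sin (k * x) / k| ≤ 3 * Real.sqrt π :=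
  stmt0_general n x
end

section
/- Let f ∈ L^1(−π,π) be 2π-periodic with Fourier coefficients f̂(n), and suppose f̂(n) ∈ K(θ₀) := {z ∈ ℂ : |arg z| ≤ θ₀} for some θ₀ ∈ [0, π/2) and all n ≥ 0. Then there is a constant C(θ₀) such that ∑_{k=1}^{n} |f̂(n+k)|/k ≤ C(θ₀) ‖f − S_n(f)‖_{L^1} for all n ≥ 1, where S_n(f) is the n-th partial Fourier sum. -/
open scoped Real
open MeasureTheory Finset Filter

/-!
Put `g = f - S_n f`: its Fourier coefficients vanish on `[-n, n]` and agree with those of `f`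
elsewhere. Since `sin (k x) e^{-inx} = (i/2) (e^{-i(n+k)x} - e^{-i(n-k)x})`, integrating `g`
against `(∑_{k=1}^n sin (k x) / k) e^{-inx}` gives `π i ∑_{k=1}^n f̂(n+k) / k`. The sine
polynomials `∑_{k=1}^n sin (k x) / k` are bounded by an absolute constant, so this sum is
`O(‖g‖_{L¹})`. Finally `|z| cos θ₀ ≤ Re z` on the sector `K(θ₀)`, so for coefficients in the sector
the sum of the moduli is at most the modulus of the sum divided by `cos θ₀`.
-/

open Real

theorem norm_sum_Ico_smul_le_of_antitoneOn {E : Type*} [NormedAddCommGroup E] [NormedSpace ℝ E]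
    {f : ℕ → ℝ} {g : ℕ → E} {m n : ℕ} {B : ℝ} (hf : AntitoneOn f (Set.Ici m))
    (hf0 : ∀ k ≥ m, 0 ≤ f k) (hg : ∀ k, ‖∑ i ∈ range k, g i‖ ≤ B) :
    ‖∑ i ∈ Ico m n, f i • g i‖ ≤ 2 * f m * B := by
  have hB : 0 ≤ B := by simpa using hg 0
  have hfm := hf0 m le_rfl
  rcases le_or_gt n m with hnm | hmn
  · rw [Ico_eq_empty_of_le hnm, sum_empty, norm_zero]
    positivity
  have hstep : ∀ i ∈ Ico m (n - 1),
      ‖(f (i + 1) - f i) • ∑ j ∈ range (i + 1), g j‖ ≤ (f i - f (i + 1)) * B := by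
    intro i hi
    have hmi := (mem_Ico.1 hi).1
    have hfi : f (i + 1) ≤ f i := hf (Set.mem_Ici.2 hmi) (Set.mem_Ici.2 (by omega)) (by omega)
    rw [norm_smul, Real.norm_eq_abs, abs_of_nonpos (by linarith), neg_sub]
    exact mul_le_mul_of_nonneg_left (hg _) (by linarith)
  have htel : ∑ i ∈ Ico m (n - 1), (f i - f (i + 1)) = f m - f (n - 1) := by
    rw [← neg_sub (f (n - 1)), ← sum_Ico_sub f (by omega), ← sum_neg_distrib]
    simp only [neg_sub]
  have hlast : 0 ≤ f (n - 1) := hf0 _ (by omega)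
  rw [sum_Ico_by_parts f g hmn]
  calc _ ≤ ‖f (n - 1) • ∑ i ∈ range n, g i‖ + ‖f m • ∑ i ∈ range m, g i‖
        + ‖∑ i ∈ Ico m (n - 1), (f (i + 1) - f i) • ∑ j ∈ range (i + 1), g j‖ :=
        (norm_sub_le _ _).trans (by gcongr; exact norm_sub_le _ _)
    _ ≤ f (n - 1) * B + f m * B + ∑ i ∈ Ico m (n - 1), (f i - f (i + 1)) * B := by
        gcongr
        · rw [norm_smul, Real.norm_of_nonneg hlast]; exact mul_le_mul_of_nonneg_left (hg n) hlast
        · rw [norm_smul, Real.norm_of_nonneg hfm]; exact mul_le_mul_of_nonneg_left (hg m) hfm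
        · exact (norm_sum_le _ _).trans (sum_le_sum hstep)
    _ = 2 * f m * B := by rw [← sum_mul, htel]; ring

lemma abs_sin_nat_mul_le (k : ℕ) (y : ℝ) : |sin (k * y)| ≤ k * |sin y| := by
  induction k with
  | zero => simp
  | succ k ih =>
    rw [Nat.cast_succ, add_mul, one_mul, sin_add]
    calc |sin (k * y) * cos y + cos (k * y) * sin y|
        ≤ |sin (k * y)| * |cos y| + |cos (k * y)| * |sin y| := by
          rw [← abs_mul, ← abs_mul]; exact abs_add_le _ _
      _ ≤ |sin (k * y)| * 1 + 1 * |sin y| := by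
          gcongr
          · exact abs_cos_le_one y
          · exact abs_cos_le_one _
      _ ≤ (k + 1) * |sin y| := by linarith

-- Multiplied out, so that it also holds when `sin (x / 2) = 0`.
lemma abs_sin_half_mul_abs_sum_sin_le (x : ℝ) (k : ℕ) :
    |sin (x / 2)| * |∑ j ∈ range k, sin (j * x)| ≤ 1 := by
  set z := Complex.exp (Complex.I * x)
  have hpow : ∀ j : ℕ, z ^ j = Complex.exp ((j * x : ℝ) * Complex.I) := fun j => by
    rw [← Complex.exp_nat_mul]; push_cast; ring_nf
  have hnorm : ∀ j : ℕ, ‖z ^ j‖ = 1 := fun j => by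
    rw [hpow, Complex.norm_exp_ofReal_mul_I]
  have hsum : ∑ j ∈ range k, sin (j * x) = (∑ j ∈ range k, z ^ j).im := by
    simp only [Complex.im_sum, hpow, Complex.exp_ofReal_mul_I_im]
  have hz1 : ‖z - 1‖ = 2 * |sin (x / 2)| := by
    rw [Complex.norm_exp_I_mul_ofReal_sub_one, norm_mul, Real.norm_eq_abs, Real.norm_eq_abs,
      abs_two]
  calc |sin (x / 2)| * |∑ j ∈ range k, sin (j * x)|
      ≤ ‖z - 1‖ / 2 * ‖∑ j ∈ range k, z ^ j‖ := by
        rw [hz1, hsum]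
        gcongr
        · linarith
        · exact Complex.abs_im_le_norm _
    _ = ‖z ^ k - 1‖ / 2 := by rw [← geom_sum_mul, norm_mul]; ring
    _ ≤ (‖z ^ k‖ + ‖(1 : ℂ)‖) / 2 := by gcongr; exact norm_sub_le _ _
    _ = 1 := by rw [hnorm, norm_one]; norm_num

lemma abs_sin_nat_mul_div_le (k : ℕ) (x : ℝ) : |sin (k * x) / k| ≤ 2 * |sin (x / 2)| := by
  have h := abs_sin_nat_mul_le (2 * k) (x / 2)
  rw [show ((2 * k : ℕ) : ℝ) * (x / 2) = k * x by push_cast; ring] at h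
  rw [abs_div, Nat.abs_cast]
  rcases k.eq_zero_or_pos with rfl | hk
  · simp
  · rw [div_le_iff₀ (by exact_mod_cast hk)]; push_cast at h; linarith

lemma abs_sum_Ico_sin_nat_mul_div_le {x : ℝ} (hx : sin (x / 2) ≠ 0) {m : ℕ} (hm : 0 < m)
    (n : ℕ) : |∑ k ∈ Ico m n, sin (k * x) / k| ≤ 2 / (m * |sin (x / 2)|) := by
  have hs : 0 < |sin (x / 2)| := abs_pos.2 hx
  have hdir : ∀ k, ‖∑ j ∈ range k, sin (j * x)‖ ≤ |sin (x / 2)|⁻¹ := fun k => by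
    rw [Real.norm_eq_abs, inv_eq_one_div, le_div_iff₀ hs, mul_comm]
    exact abs_sin_half_mul_abs_sum_sin_le x k
  have hanti : AntitoneOn (fun k : ℕ => (k : ℝ)⁻¹) (Set.Ici m) := fun a ha b _ hab =>
    inv_anti₀ (by exact_mod_cast hm.trans_le ha) (by exact_mod_cast hab)
  have habel := norm_sum_Ico_smul_le_of_antitoneOn hanti (fun k _ => by positivity) hdir (n := n)
  simp only [smul_eq_mul, Real.norm_eq_abs] at habel
  simp only [div_eq_inv_mul (sin _)]
  exact habel.trans_eq (by field_simp)

theorem abs_sum_sin_nat_mul_div_le (n : ℕ) (x : ℝ) :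
    |∑ k ∈ Icc 1 n, sin (k * x) / k| ≤ 4 := by
  set s := |sin (x / 2)|
  rcases (abs_nonneg (sin (x / 2))).eq_or_lt with hs | hs
  · have hzero : ∀ k ∈ Icc 1 n, sin (k * x) / k = 0 := fun k _ =>
      abs_nonpos_iff.1 ((abs_sin_nat_mul_div_le k x).trans_eq (by rw [← hs, mul_zero]))
    rw [sum_congr rfl hzero, sum_const_zero, abs_zero]; norm_num
  -- Split at `M = ⌊1 / |sin (x / 2)|⌋`: termwise bound below `M`, Abel summation above.
  set M := ⌊s⁻¹⌋₊
  have hlow : |∑ k ∈ Icc 1 n with k ≤ M, sin (k * x) / k| ≤ 2 :=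
    calc _ ≤ ∑ k ∈ Icc 1 n with k ≤ M, |sin (k * x) / k| := abs_sum_le_sum_abs _ _
      _ ≤ ∑ k ∈ Icc 1 M, 2 * s := by
          refine sum_le_sum_of_subset_of_nonneg (fun k hk => ?_) (fun _ _ _ => by positivity)
            |>.trans' (sum_le_sum fun k _ => abs_sin_nat_mul_div_le k x)
          simp only [mem_filter, mem_Icc] at hk ⊢; omega
      _ = M * s * 2 := by
          simp only [sum_const, Nat.card_Icc, add_tsub_cancel_right, nsmul_eq_mul]; ring
      _ ≤ s⁻¹ * s * 2 := by gcongr; exact Nat.floor_le (by positivity)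
      _ = 2 := by rw [inv_mul_cancel₀ hs.ne', one_mul]
  have hhigh : |∑ k ∈ Icc 1 n with ¬k ≤ M, sin (k * x) / k| ≤ 2 := by
    have hIco : (Icc 1 n).filter (fun k => ¬k ≤ M) = Ico (M + 1) (n + 1) := by
      ext k; simp only [mem_filter, mem_Icc, mem_Ico]; omega
    have hM : 1 < (M + 1 : ℕ) * s := by
      rw [← inv_mul_cancel₀ hs.ne']; push_cast
      exact mul_lt_mul_of_pos_right (Nat.lt_floor_add_one _) hs
    rw [hIco]
    refine (abs_sum_Ico_sin_nat_mul_div_le (abs_pos.1 hs) M.succ_pos _).trans ?_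
    rw [div_le_iff₀ (by positivity)]
    linarith
  rw [← sum_filter_add_sum_filter_not (Icc 1 n) (· ≤ M)]
  linarith [abs_add_le (∑ k ∈ Icc 1 n with k ≤ M, sin (k * x) / k)
    (∑ k ∈ Icc 1 n with ¬k ≤ M, sin (k * x) / k)]

lemma integral_exp_I_int_mul (m : ℤ) :
    ∫ x in (-π)..π, Complex.exp (Complex.I * m * x) = if m = 0 then (2 * π : ℂ) else 0 := by
  split_ifs with hm
  · simp only [hm, Int.cast_zero, mul_zero, zero_mul, Complex.exp_zero,
      intervalIntegral.integral_const, sub_neg_eq_add, Complex.real_smul, Complex.ofReal_add, mul_one]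
    ring
  have hc : Complex.I * m ≠ 0 := by simp [hm]
  rw [integral_exp_mul_complex hc, div_eq_zero_iff, sub_eq_zero]
  left
  have h2π : Complex.I * m * π = Complex.I * m * ((-π : ℝ) : ℂ) + m * (2 * π * Complex.I) := by
    push_cast; ring
  rw [h2π, Complex.exp_add, Complex.exp_int_mul_two_pi_mul_I, mul_one]

lemma integral_mul_exp_eq_fCoef (f : ℝ → ℂ) (m : ℤ) :
    ∫ x in (-π)..π, f x * Complex.exp (-Complex.I * m * x) = 2 * π * fCoef f m := by
  rw [fCoef, ← mul_assoc, mul_one_div_cancel (by simp [pi_ne_zero]), one_mul]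

lemma fCoef_sum_mul_exp (s : Finset ℤ) (c : ℤ → ℂ) (m : ℤ) :
    fCoef (fun x => ∑ k ∈ s, c k * Complex.exp (Complex.I * k * x)) m =
      if m ∈ s then c m else 0 := by
  have hprod : ∀ x : ℝ, (∑ k ∈ s, c k * Complex.exp (Complex.I * k * x)) *
      Complex.exp (-Complex.I * m * x) =
        ∑ k ∈ s, c k * Complex.exp (Complex.I * ((k - m : ℤ) : ℂ) * x) := fun x => by
    rw [sum_mul]
    refine sum_congr rfl fun k _ => ?_
    rw [mul_assoc, ← Complex.exp_add]
    push_cast; ring_nf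
  rw [fCoef, intervalIntegral.integral_congr fun x _ => hprod x,
    intervalIntegral.integral_finsetSum fun k _ => by
      apply Continuous.intervalIntegrable; fun_prop]
  simp only [intervalIntegral.integral_const_mul, integral_exp_I_int_mul, sub_eq_zero, mul_ite,
    mul_zero, sum_ite_eq']
  split_ifs
  · field_simp
  · rfl

lemma fCoef_sub {f g : ℝ → ℂ} (hf : IntervalIntegrable f volume (-π) π)
    (hg : IntervalIntegrable g volume (-π) π) (m : ℤ) :
    fCoef (fun x => f x - g x) m = fCoef f m - fCoef g m := by
  have hexp : ContinuousOn (fun x : ℝ => Complex.exp (-Complex.I * m * x)) (Set.uIcc (-π) π) :=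
    Continuous.continuousOn (by fun_prop)
  simp only [fCoef, sub_mul, ← mul_sub]
  rw [intervalIntegral.integral_sub (hf.mul_continuousOn hexp) (hg.mul_continuousOn hexp)]

lemma continuous_pSum (f : ℝ → ℂ) (n : ℕ) : Continuous (pSum f n) := by
  unfold pSum; fun_prop

lemma fCoef_sub_pSum {f : ℝ → ℂ} (hf : IntervalIntegrable f volume (-π) π) (n : ℕ) (m : ℤ) :
    fCoef (fun x => f x - pSum f n x) m = if m ∈ Icc (-(n : ℤ)) n then 0 else fCoef f m := by
  rw [fCoef_sub hf ((continuous_pSum f n).intervalIntegrable _ _)]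
  unfold pSum
  rw [fCoef_sum_mul_exp]
  split_ifs <;> simp

lemma integral_mul_sin_mul_exp {g : ℝ → ℂ} (hg : IntervalIntegrable g volume (-π) π)
    (n : ℤ) (k : ℕ) :
    ∫ x in (-π)..π, g x * (sin (k * x) * Complex.exp (-Complex.I * n * x)) =
      π * Complex.I * (fCoef g (n + k) - fCoef g (n - k)) := by
  have hsin : ∀ x : ℝ, g x * (sin (k * x) * Complex.exp (-Complex.I * n * x)) =
      Complex.I / 2 * (g x * Complex.exp (-Complex.I * ((n + k : ℤ) : ℂ) * x) -
        g x * Complex.exp (-Complex.I * ((n - k : ℤ) : ℂ) * x)) := fun x => by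
    have hexp : ∀ j : ℤ, Complex.exp (-Complex.I * ((n + j : ℤ) : ℂ) * x) =
        Complex.exp (-(j * x) * Complex.I) * Complex.exp (-Complex.I * n * x) := fun j => by
      rw [← Complex.exp_add]; push_cast; ring_nf
    rw [sub_eq_add_neg (n : ℤ), hexp, hexp, Complex.ofReal_sin, Complex.sin]
    push_cast
    ring_nf
  have hint : ∀ m : ℤ, IntervalIntegrable (fun x => g x * Complex.exp (-Complex.I * m * x))
      volume (-π) π := fun m => hg.mul_continuousOn (Continuous.continuousOn (by fun_prop))
  rw [intervalIntegral.integral_congr fun x _ => hsin x, intervalIntegral.integral_const_mul,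
    intervalIntegral.integral_sub (hint _) (hint _), integral_mul_exp_eq_fCoef,
    integral_mul_exp_eq_fCoef]
  ring

theorem norm_sum_fCoef_div_le {g : ℝ → ℂ} (hg : IntervalIntegrable g volume (-π) π)
    (n : ℤ) (N : ℕ) (hvanish : ∀ k ∈ Icc 1 N, fCoef g (n - k) = 0) :
    π * ‖∑ k ∈ Icc 1 N, fCoef g (n + k) / k‖ ≤ 4 * L1 g := by
  set D : ℝ → ℝ := fun x => ∑ k ∈ Icc 1 N, sin (k * x) / k
  have hint : ∀ k ∈ Icc 1 N, IntervalIntegrable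
      (fun x => g x * (sin (k * x) * Complex.exp (-Complex.I * n * x))) volume (-π) π :=
    fun k _ => hg.mul_continuousOn (Continuous.continuousOn (by fun_prop))
  have hid : ∫ x in (-π)..π, g x * (D x * Complex.exp (-Complex.I * n * x)) =
      π * Complex.I * ∑ k ∈ Icc 1 N, fCoef g (n + k) / k := by
    have hpt : ∀ x : ℝ, g x * (D x * Complex.exp (-Complex.I * n * x)) = ∑ k ∈ Icc 1 N,
        (k : ℂ)⁻¹ * (g x * (sin (k * x) * Complex.exp (-Complex.I * n * x))) := fun x => by
      simp only [D]
      push_cast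
      rw [sum_mul, mul_sum]
      exact sum_congr rfl fun k _ => by ring
    rw [intervalIntegral.integral_congr fun x _ => hpt x,
      intervalIntegral.integral_finsetSum fun k hk => (hint k hk).const_mul _, mul_sum]
    refine sum_congr rfl fun k hk => ?_
    rw [intervalIntegral.integral_const_mul, integral_mul_sin_mul_exp hg, hvanish k hk, sub_zero]
    ring
  calc π * ‖∑ k ∈ Icc 1 N, fCoef g (n + k) / k‖
      = ‖∫ x in (-π)..π, g x * (D x * Complex.exp (-Complex.I * n * x))‖ := by
        rw [hid, norm_mul, norm_mul, Complex.norm_I, mul_one, Complex.norm_of_nonneg pi_pos.le]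
    _ ≤ ∫ x in (-π)..π, 4 * ‖g x‖ := by
        refine intervalIntegral.norm_integral_le_of_norm_le (by linarith [pi_pos])
          (Eventually.of_forall fun x _ => ?_) (hg.norm.const_mul 4)
        have he : ‖Complex.exp (-Complex.I * n * x)‖ = 1 := by
          rw [Complex.norm_exp]; simp
        rw [norm_mul, norm_mul, Complex.norm_real, Real.norm_eq_abs, he, mul_one, mul_comm]
        exact mul_le_mul_of_nonneg_right (abs_sum_sin_nat_mul_div_le N x) (norm_nonneg _)
    _ = 4 * L1 g := intervalIntegral.integral_const_mul _ _

lemma norm_mul_cos_le_re {z : ℂ} {θ : ℝ} (hθ : θ ≤ π) (hz : |z.arg| ≤ θ) :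
    ‖z‖ * cos θ ≤ z.re := by
  rw [← Complex.norm_mul_cos_arg z, ← cos_abs z.arg]
  exact mul_le_mul_of_nonneg_left
    (cos_le_cos_of_nonneg_of_le_pi (abs_nonneg _) hθ hz) (norm_nonneg z)

lemma arg_div_natCast {z : ℂ} {k : ℕ} (hk : 0 < k) : (z / k).arg = z.arg := by
  rw [← Complex.ofReal_natCast, div_eq_mul_inv, ← Complex.ofReal_inv,
    Complex.arg_mul_real (inv_pos.2 (by exact_mod_cast hk))]

theorem cos_mul_sum_norm_le_norm_sum {ι : Type*} (s : Finset ι) (z : ι → ℂ) {θ : ℝ}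
    (hθ : θ ≤ π) (hz : ∀ i ∈ s, |(z i).arg| ≤ θ) :
    cos θ * ∑ i ∈ s, ‖z i‖ ≤ ‖∑ i ∈ s, z i‖ :=
  calc cos θ * ∑ i ∈ s, ‖z i‖ = ∑ i ∈ s, ‖z i‖ * cos θ := by rw [mul_sum]; simp only [mul_comm]
    _ ≤ ∑ i ∈ s, (z i).re := sum_le_sum fun i hi => norm_mul_cos_le_re hθ (hz i hi)
    _ = (∑ i ∈ s, z i).re := (Complex.re_sum _ _).symm
    _ ≤ ‖∑ i ∈ s, z i‖ := Complex.re_le_norm _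

theorem stmt2 (θ₀ : ℝ) (hθ0 : 0 ≤ θ₀) (hθ1 : θ₀ < π / 2) :
    ∃ C : ℝ, 0 < C ∧ ∀ f : ℝ → ℂ, Function.Periodic f (2 * π) →
      IntervalIntegrable f MeasureTheory.volume (-π) π →
      (∀ n : ℕ, |(fCoef f n).arg| ≤ θ₀) →
      ∀ n : ℕ, 1 ≤ n →
        ∑ k ∈ Finset.Icc 1 n, ‖fCoef f ((n : ℤ) + k)‖ / k ≤
          C * L1 (fun x => f x - pSum f n x) := by
  have hcos : 0 < cos θ₀ := cos_pos_of_mem_Ioo ⟨by linarith [pi_pos], hθ1⟩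
  refine ⟨4 / (π * cos θ₀), by positivity, fun f _ hf harg n _ => ?_⟩
  have hcoef := fCoef_sub_pSum hf n
  have hdual := norm_sum_fCoef_div_le (hf.sub ((continuous_pSum f n).intervalIntegrable _ _)) n n
    fun k hk => by rw [hcoef, if_pos]; simp only [mem_Icc] at hk ⊢; omega
  have htail : ∀ k ∈ Icc 1 n, fCoef (fun x => f x - pSum f n x) (n + k) = fCoef f (n + k) :=
    fun k hk => by rw [hcoef, if_neg]; simp only [mem_Icc] at hk ⊢; omega
  rw [sum_congr rfl fun k hk => by rw [htail k hk]] at hdual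
  have hsector := cos_mul_sum_norm_le_norm_sum (Icc 1 n) (fun k => fCoef f (n + k) / k)
    (θ := θ₀) (by linarith [pi_pos]) fun k hk => by
      rw [arg_div_natCast (mem_Icc.1 hk).1]
      exact_mod_cast harg (n + k)
  simp only [norm_div, Complex.norm_natCast] at hsector
  rw [div_mul_eq_mul_div, le_div_iff₀ (by positivity)]
  calc (∑ k ∈ Icc 1 n, ‖fCoef f (n + k)‖ / k) * (π * cos θ₀)
      = π * (cos θ₀ * ∑ k ∈ Icc 1 n, ‖fCoef f (n + k)‖ / k) := by ring
    _ ≤ π * ‖∑ k ∈ Icc 1 n, fCoef f (n + k) / k‖ := by gcongr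
    _ ≤ 4 * L1 fun x => f x - pSum f n x := hdual
end

section
/- Let {c_n}_{n≥0} be a sequence of complex numbers in a sector K(θ₁) (θ₁ ∈ [0, π/2)) belonging to MVBVS with parameter λ ≥ 2, i.e. ∑_{k=m}^{2m} |c_{k+1} − c_k| ≤ (C/m) ∑_{k=[m/λ]}^{[λm]} |c_k| for all m ≥ 1. Then for any fixed 1 < μ < 2, ∑_{k=n}^{[μn]} |c_{k+1} − c_k| log k = O( max_{[n/λ] ≤ k ≤ [λn]} |c_k| log k ) as n → ∞, with implicit constant depending only on the sequence and λ. -/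
open scoped Real
open MeasureTheory Finset Filter

/-!
On the window `[n/λ, λn]` every index satisfies `k ≥ n/(2λ)`, so `k² ≥ 2n` once `n ≥ 8λ²`, i.e.
`log k ≥ log(2n)/2`. The hypothesis `‖c k‖ log k ≤ B` on the window thus gives
`log(2n) · ∑ ‖c k‖ ≤ 4λnB`, while `log k ≤ log(2n)` on `[n, μn] ⊆ [n, 2n]`. Feeding the mean value
bound for `m = n` in between, the factor `log(2n)` cancels and the sum is at most `4CλB`.
-/

lemma log_natCast_le_log_natCast {k m : ℕ} (h : k ≤ m) : Real.log k ≤ Real.log m := by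
  rcases Nat.eq_zero_or_pos k with rfl | hk
  · simpa using Real.log_natCast_nonneg m
  · exact Real.log_le_log (by exact_mod_cast hk) (by exact_mod_cast h)

lemma sum_mul_log_le_log_mul_sum {s : Finset ℕ} {m : ℕ} (hs : ∀ k ∈ s, k ≤ m) {a : ℕ → ℝ}
    (ha : ∀ k, 0 ≤ a k) : ∑ k ∈ s, a k * Real.log k ≤ Real.log m * ∑ k ∈ s, a k := by
  rw [mul_sum]
  exact sum_le_sum fun k hk => by
    rw [mul_comm]
    exact mul_le_mul_of_nonneg_right (log_natCast_le_log_natCast (hs k hk)) (ha k)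

lemma card_Icc_floor_le_two_mul (m : ℕ) {x : ℝ} (hx : 1 ≤ x) : (#(Icc m ⌊x⌋₊) : ℝ) ≤ 2 * x := by
  have hcard : #(Icc m ⌊x⌋₊) ≤ ⌊x⌋₊ + 1 := by rw [Nat.card_Icc]; omega
  have hfloor : (⌊x⌋₊ : ℝ) ≤ x := Nat.floor_le (by linarith)
  calc (#(Icc m ⌊x⌋₊) : ℝ) ≤ ⌊x⌋₊ + 1 := by exact_mod_cast hcard
    _ ≤ 2 * x := by linarith

lemma log_two_mul_le_two_mul_log {lam : ℝ} (hlam : 1 ≤ lam) {n k : ℕ} (hn : 8 * lam ^ 2 ≤ n)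
    (hk : ⌊(n : ℝ) / lam⌋₊ ≤ k) : Real.log (2 * n) ≤ 2 * Real.log k := by
  have hlam0 : 0 < lam := by linarith
  have hfloor : (n : ℝ) / lam - 1 < k :=
    (Nat.sub_one_lt_floor _).trans_le (by exact_mod_cast hk)
  have hhalf : (n : ℝ) / (2 * lam) ≤ k := by
    have : 1 ≤ (n : ℝ) / (2 * lam) := by rw [le_div_iff₀ (by positivity)]; nlinarith
    have : (n : ℝ) / lam = 2 * ((n : ℝ) / (2 * lam)) := by field_simp
    linarith
  have hsq : 2 * (n : ℝ) ≤ (k : ℝ) ^ 2 := by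
    calc 2 * (n : ℝ) ≤ ((n : ℝ) / (2 * lam)) ^ 2 := by
          rw [div_pow, le_div_iff₀ (by positivity)]; nlinarith
      _ ≤ (k : ℝ) ^ 2 := by gcongr
  have hn0 : (0 : ℝ) < n := by nlinarith
  calc Real.log (2 * n) ≤ Real.log ((k : ℝ) ^ 2) := Real.log_le_log (by positivity) hsq
    _ = 2 * Real.log k := by rw [Real.log_pow]; norm_num

lemma log_two_mul_mul_sum_norm_le {c : ℕ → ℂ} {lam : ℝ} (hlam : 1 ≤ lam) {n : ℕ}
    (hn : 8 * lam ^ 2 ≤ n) {B : ℝ}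
    (hB : ∀ k ∈ Icc ⌊(n : ℝ) / lam⌋₊ ⌊lam * n⌋₊, ‖c k‖ * Real.log k ≤ B) :
    Real.log (2 * n) * ∑ k ∈ Icc ⌊(n : ℝ) / lam⌋₊ ⌊lam * n⌋₊, ‖c k‖ ≤ 4 * lam * n * B := by
  set W := Icc ⌊(n : ℝ) / lam⌋₊ ⌊lam * n⌋₊
  have hlog : ∀ k ∈ W, Real.log (2 * n) * ‖c k‖ ≤ 2 * B := fun k hk => by
    have := log_two_mul_le_two_mul_log hlam hn (mem_Icc.mp hk).1
    nlinarith [hB k hk, norm_nonneg (c k)]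
  have hlamn : 1 ≤ lam * n := by nlinarith
  have hW : ⌊lam * n⌋₊ ∈ W := by
    refine mem_Icc.mpr ⟨Nat.floor_le_floor ?_, le_rfl⟩
    rw [div_le_iff₀ (by linarith)]
    nlinarith
  have hB0 : 0 ≤ B := by
    have := hlog _ hW
    have : 0 ≤ Real.log (2 * n) := Real.log_nonneg (by nlinarith)
    nlinarith [norm_nonneg (c ⌊lam * n⌋₊)]
  calc Real.log (2 * n) * ∑ k ∈ W, ‖c k‖ ≤ #W • (2 * B) := by
        rw [mul_sum]; exact sum_le_card_nsmul _ _ _ hlog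
    _ ≤ 2 * (lam * n) * (2 * B) := by
        rw [nsmul_eq_mul]
        exact mul_le_mul_of_nonneg_right (card_Icc_floor_le_two_mul _ hlamn) (by positivity)
    _ = 4 * lam * n * B := by ring

theorem stmt7_general (c : ℕ → ℂ)
    (lam : ℝ) (hlam : 2 ≤ lam) (C : ℝ) (hC : 0 < C)
    (hmv : ∀ m : ℕ, 1 ≤ m →
      ∑ k ∈ Finset.Icc m (2 * m), ‖c (k + 1) - c k‖ ≤
        C / m * ∑ k ∈ Finset.Icc ⌊(m : ℝ) / lam⌋₊ ⌊lam * m⌋₊, ‖c k‖)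
    (μ : ℝ) (hμ2 : μ < 2) :
    ∃ C' : ℝ, 0 < C' ∧ ∃ N : ℕ, ∀ n : ℕ, N ≤ n → ∀ B : ℝ,
      (∀ k ∈ Finset.Icc ⌊(n : ℝ) / lam⌋₊ ⌊lam * n⌋₊,
        ‖c k‖ * Real.log k ≤ B) →
      ∑ k ∈ Finset.Icc n ⌊μ * n⌋₊, ‖c (k + 1) - c k‖ * Real.log k ≤
        C' * B := by
  refine ⟨4 * C * lam, by positivity, ⌈8 * lam ^ 2⌉₊, fun n hn B hB => ?_⟩
  have hn8 : 8 * lam ^ 2 ≤ n := Nat.ceil_le.mp hn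
  have hn0 : (0 : ℝ) < n := by nlinarith
  have hμn : ⌊μ * n⌋₊ ≤ 2 * n := Nat.floor_le_of_le (by push_cast; nlinarith)
  calc ∑ k ∈ Icc n ⌊μ * n⌋₊, ‖c (k + 1) - c k‖ * Real.log k
      ≤ ∑ k ∈ Icc n (2 * n), ‖c (k + 1) - c k‖ * Real.log k :=
        sum_le_sum_of_subset_of_nonneg (Icc_subset_Icc le_rfl hμn)
          fun k _ _ => mul_nonneg (norm_nonneg _) (Real.log_natCast_nonneg k)
    _ ≤ Real.log (2 * n) * ∑ k ∈ Icc n (2 * n), ‖c (k + 1) - c k‖ := by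
        simpa using sum_mul_log_le_log_mul_sum (m := 2 * n) (fun k hk => (mem_Icc.mp hk).2)
          fun k => norm_nonneg (c (k + 1) - c k)
    _ ≤ Real.log (2 * n) * (C / n * ∑ k ∈ Icc ⌊(n : ℝ) / lam⌋₊ ⌊lam * n⌋₊, ‖c k‖) :=
        mul_le_mul_of_nonneg_left (hmv n (by exact_mod_cast hn0))
          (Real.log_nonneg (by nlinarith))
    _ = C / n * (Real.log (2 * n) * ∑ k ∈ Icc ⌊(n : ℝ) / lam⌋₊ ⌊lam * n⌋₊, ‖c k‖) := by ring
    _ ≤ C / n * (4 * lam * n * B) :=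
        mul_le_mul_of_nonneg_left (log_two_mul_mul_sum_norm_le (by linarith) hn8 hB)
          (by positivity)
    _ = 4 * C * lam * B := by field_simp

theorem stmt7 (c : ℕ → ℂ) (θ : ℝ) (hθ0 : 0 ≤ θ) (hθ1 : θ < π / 2)
    (hsec : ∀ n, |(c n).arg| ≤ θ)
    (lam : ℝ) (hlam : 2 ≤ lam) (C : ℝ) (hC : 0 < C)
    (hmv : ∀ m : ℕ, 1 ≤ m →
      ∑ k ∈ Finset.Icc m (2 * m), ‖c (k + 1) - c k‖ ≤
        C / m * ∑ k ∈ Finset.Icc ⌊(m : ℝ) / lam⌋₊ ⌊lam * m⌋₊, ‖c k‖)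
    (μ : ℝ) (hμ1 : 1 < μ) (hμ2 : μ < 2) :
    ∃ C' : ℝ, 0 < C' ∧ ∃ N : ℕ, ∀ n : ℕ, N ≤ n → ∀ B : ℝ,
      (∀ k ∈ Finset.Icc ⌊(n : ℝ) / lam⌋₊ ⌊lam * n⌋₊,
        ‖c k‖ * Real.log k ≤ B) →
      ∑ k ∈ Finset.Icc n ⌊μ * n⌋₊, ‖c (k + 1) - c k‖ * Real.log k ≤
        C' * B :=
  stmt7_general c lam hlam C hC hmv μ hμ2
end
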